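/- arXiv:1311.0901 — 7 statements merged into one kernel-verified Lean document; each statement's English description precedes it below -/
import Mathlib

section
/- Suppose ψ : [0,∞) → ℝ is continuously differentiable with ψ(0) = 0, and suppose E := ∫₀^∞ [ψ'(r)² + (ψ(r) - sin ψ(r) cos ψ(r))²/r⁴] r² dr < ∞. Then for every r > 0, (1/2)(ψ(r)² - sin²ψ(r)) ≤ E. Consequently ψ is bounded: |ψ(r)| ≤ C(E) for a function C with C(E) → 0 as E → 0. -/
open Real MeasureTheory Filter Set Topology

/-!
With `G x = (x² - sin² x) / 2` one has
`(G ∘ ψ)' = ψ' (ψ - sin ψ cos ψ) = (r ψ') ((ψ - sin ψ cos ψ) / r)`, which by AM-GM is at most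
half the energy density; integrating from `ψ 0 = 0` gives `G (ψ r) ≤ E`. Since
`x² - sin² x ≥ x⁴ / 9` for `|x| ≤ 1` and `≥ 1 / 9` for `|x| ≥ 1`, the bound `G x ≤ E` forces
`|x| ≤ (18 E)^(1/4)` in the first case, and `|x| ≤ 1 + √(2E)` with `18 E ≥ 1` in the second.
-/

theorem pow_four_div_nine_le_sq_sub_sin_sq {x : ℝ} (hx₀ : 0 ≤ x) (hx₁ : x ≤ 1) :
    x ^ 4 / 9 ≤ x ^ 2 - sin x ^ 2 := by
  have hsin := (abs_le.1 (sin_bound (x := x) (by rwa [abs_of_nonneg hx₀]))).2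
  rw [abs_of_nonneg hx₀] at hsin
  have hx53 : x ^ 5 ≤ x ^ 3 := pow_le_pow_of_le_one hx₀ hx₁ (by norm_num)
  have hsin_nonneg : 0 ≤ sin x :=
    sin_nonneg_of_nonneg_of_le_pi hx₀ (hx₁.trans (by linarith [pi_gt_three]))
  have hcube : x ^ 3 / 9 ≤ x - sin x := by linarith [pow_nonneg hx₀ 3]
  calc x ^ 4 / 9 = x ^ 3 / 9 * x := by ring
    _ ≤ (x - sin x) * (x + sin x) :=
      mul_le_mul hcube (by linarith) hx₀ (by linarith [pow_nonneg hx₀ 3])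
    _ = x ^ 2 - sin x ^ 2 := by ring

theorem one_div_nine_le_sq_sub_sin_sq {x : ℝ} (hx : 1 ≤ x) :
    1 / 9 ≤ x ^ 2 - sin x ^ 2 := by
  -- `x ∓ sin x` are nondecreasing because `sin` is 1-Lipschitz, so we compare with `x = 1`.
  have hlip := abs_le.1 ((abs_sin_sub_sin_le x 1).trans_eq (abs_of_nonneg (by linarith)))
  have hone := pow_four_div_nine_le_sq_sub_sin_sq zero_le_one le_rfl
  calc 1 / 9 ≤ (1 - sin 1) * (1 + sin 1) := by linarith
    _ ≤ (x - sin x) * (x + sin x) :=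
      mul_le_mul (by linarith) (by linarith) (by linarith [neg_one_le_sin 1])
        (by linarith [sin_le_one x])
    _ = x ^ 2 - sin x ^ 2 := by ring

noncomputable def energyBound (E : ℝ) : ℝ := √(√(18 * E)) + √(2 * E)

theorem tendsto_energyBound : Tendsto energyBound (𝓝[>] 0) (𝓝 0) := by
  have hcont : Continuous energyBound := by unfold energyBound; fun_prop
  simpa [energyBound] using (hcont.tendsto 0).mono_left nhdsWithin_le_nhds

theorem abs_le_energyBound {x E : ℝ} (h : (x ^ 2 - sin x ^ 2) / 2 ≤ E) :
    |x| ≤ energyBound E := by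
  wlog hx : 0 ≤ x generalizing x
  · simpa using this (x := -x) (by simpa [neg_sq] using h) (by linarith)
  rw [abs_of_nonneg hx, energyBound]
  rcases le_or_gt x 1 with hx₁ | hx₁
  · have hx4 : (x ^ 2) ^ 2 ≤ 18 * E := by
      linarith [pow_four_div_nine_le_sq_sub_sin_sq hx hx₁]
    have : x ≤ √(√(18 * E)) := le_sqrt_of_sq_le (le_sqrt_of_sq_le hx4)
    linarith [sqrt_nonneg (2 * E)]
  · have hE : 1 ≤ 18 * E := by linarith [one_div_nine_le_sq_sub_sin_sq hx₁.le]
    have hroot : 1 ≤ √(√(18 * E)) := by rwa [one_le_sqrt, one_le_sqrt]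
    have hsq : (√(2 * E)) ^ 2 = 2 * E := sq_sqrt (by linarith)
    have hx_le : x ≤ 1 + √(2 * E) := by
      nlinarith [sin_sq_le_one x, sqrt_nonneg (2 * E)]
    linarith

theorem two_mul_le_sq_add_sq_div_pow_four_mul_sq (a b : ℝ) {s : ℝ} (hs : s ≠ 0) :
    2 * (a * b) ≤ (a ^ 2 + b ^ 2 / s ^ 4) * s ^ 2 := by
  have hexpand : (a ^ 2 + b ^ 2 / s ^ 4) * s ^ 2 - 2 * (a * b) = (a * s - b / s) ^ 2 := by
    field_simp
    ring
  rw [← sub_nonneg, hexpand]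
  positivity

theorem sub_le_setIntegral_Ioi_of_hasDerivAt {F f g : ℝ → ℝ} {a b : ℝ} (hab : a ≤ b)
    (hF : ∀ x ∈ Icc a b, HasDerivAt F (f x) x) (hfg : ∀ x ∈ Ioo a b, f x ≤ g x)
    (hg : IntegrableOn g (Ioi a)) (hg_nonneg : ∀ x ∈ Ioi a, 0 ≤ g x) :
    F b - F a ≤ ∫ x in Ioi a, g x := by
  -- The one-sided FTC inequality needs no integrability of `f`.
  have hg_Icc : IntegrableOn g (Icc a b) :=
    (integrableOn_Icc_iff_integrableOn_Ioc).2 (hg.mono_set Ioc_subset_Ioi_self)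
  calc F b - F a ≤ ∫ x in a..b, g x :=
        intervalIntegral.sub_le_integral_of_hasDeriv_right_of_le hab
          (fun x hx => (hF x hx).continuousAt.continuousWithinAt)
          (fun x hx => (hF x (Ioo_subset_Icc_self hx)).hasDerivWithinAt) hg_Icc hfg
    _ = ∫ x in Ioc a b, g x := intervalIntegral.integral_of_le hab
    _ ≤ ∫ x in Ioi a, g x :=
        setIntegral_mono_set hg (ae_restrict_of_forall_mem measurableSet_Ioi hg_nonneg)
          Ioc_subset_Ioi_self.eventuallyLE

theorem hasDerivAt_half_sq_sub_sin_sq {ψ : ℝ → ℝ} {ψ' x : ℝ} (hψ : HasDerivAt ψ ψ' x) :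
    HasDerivAt (fun t => (ψ t ^ 2 - sin (ψ t) ^ 2) / 2)
      (ψ' * (ψ x - sin (ψ x) * cos (ψ x))) x := by
  refine (((hψ.fun_pow 2).fun_sub (hψ.sin.fun_pow 2)).div_const 2).congr_deriv ?_
  push_cast
  ring

noncomputable def energyDensity (ψ ψ' : ℝ → ℝ) (r : ℝ) : ℝ :=
  (ψ' r ^ 2 + (ψ r - sin (ψ r) * cos (ψ r)) ^ 2 / r ^ 4) * r ^ 2

theorem half_sq_sub_sin_sq_le_integral_energyDensity {ψ ψ' : ℝ → ℝ}
    (hψ : ∀ r, 0 ≤ r → HasDerivAt ψ (ψ' r) r) (hψ₀ : ψ 0 = 0)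
    (hE : IntegrableOn (energyDensity ψ ψ') (Ioi 0)) {r : ℝ} (hr : 0 ≤ r) :
    (ψ r ^ 2 - sin (ψ r) ^ 2) / 2 ≤ ∫ s in Ioi 0, energyDensity ψ ψ' s := by
  have hG_nonneg (s : ℝ) : 0 ≤ energyDensity ψ ψ' s := by
    rw [energyDensity]
    positivity
  have hbound := sub_le_setIntegral_Ioi_of_hasDerivAt hr
    (fun s hs => hasDerivAt_half_sq_sub_sin_sq (hψ s hs.1)) ?_ hE (fun s _ => hG_nonneg s)
  · simpa [hψ₀] using hbound
  · intro s hs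
    have := two_mul_le_sq_add_sq_div_pow_four_mul_sq (ψ' s)
      (ψ s - sin (ψ s) * cos (ψ s)) hs.1.ne'
    have := hG_nonneg s
    rw [energyDensity] at *
    linarith

/-- If ψ is C¹ on [0,∞) with ψ(0)=0 and finite energy E, then
    (1/2)(ψ(r)² - sin²ψ(r)) ≤ E for all r > 0, and |ψ(r)| ≤ C(E) with C(E) → 0 as E → 0. -/
theorem stmt2 :
    ∃ C : ℝ → ℝ, Tendsto C (𝓝[>] (0:ℝ)) (𝓝 0) ∧
      ∀ (ψ ψ' : ℝ → ℝ),
        (∀ r : ℝ, 0 ≤ r → HasDerivAt ψ (ψ' r) r) → ψ 0 = 0 →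
        IntegrableOn
          (fun r => (ψ' r ^ 2 + (ψ r - Real.sin (ψ r) * Real.cos (ψ r)) ^ 2 / r ^ 4) * r ^ 2)
          (Ioi 0) →
        (∀ r : ℝ, 0 < r →
          ((ψ r) ^ 2 - Real.sin (ψ r) ^ 2) / 2 ≤
            ∫ r in Ioi (0:ℝ),
              (ψ' r ^ 2 + (ψ r - Real.sin (ψ r) * Real.cos (ψ r)) ^ 2 / r ^ 4) * r ^ 2) ∧
        (∀ r : ℝ, 0 ≤ r →
          |ψ r| ≤ C (∫ r in Ioi (0:ℝ),
              (ψ' r ^ 2 + (ψ r - Real.sin (ψ r) * Real.cos (ψ r)) ^ 2 / r ^ 4) * r ^ 2)) := by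
  refine ⟨energyBound, tendsto_energyBound, fun ψ ψ' hψ hψ₀ hE => ?_⟩
  have key : ∀ r, 0 ≤ r →
      (ψ r ^ 2 - sin (ψ r) ^ 2) / 2 ≤ ∫ s in Ioi 0, energyDensity ψ ψ' s :=
    fun r hr => half_sq_sub_sin_sq_le_integral_energyDensity hψ hψ₀ hE hr
  exact ⟨fun r hr => key r hr.le, fun r hr => abs_le_energyBound (key r hr)⟩
end

section
/- Let φ : (0,∞) → ℝ be a C² solution of φ'' + (2/r)φ' = sin(2φ)/r² + (φ - sin φ cos φ)(1 - cos 2φ)/r⁴. Define P(r) = r² φ'(r)² - 2 sin²φ(r) - r⁻²(φ(r) - sin φ(r) cos φ(r))². Then the function Φ(r) := r² P(r) satisfies Φ'(r) = -4r sin² φ(r) for all r > 0. -/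
/-! Multiplying the equation by `r⁴` puts it in the form `r⁴φ'' + 2r³φ' = r² V'(φ) + W'(φ)/2`
with `V = sin²` and `W = (x - sin x cos x)²`, since `(x - sin x cos x)' = 1 - cos 2x`.
Differentiating `r⁴φ'² - 2r²V(φ) - W(φ)` and substituting `2φ'` times the equation, everything
cancels except the term `-4r V(φ)` coming from the explicit `r²` in front of `V`. -/

open Real

theorem hasDerivAt_energy {φ φ' V W : ℝ → ℝ} {r φ'' v w : ℝ}
    (hφ : HasDerivAt φ (φ' r) r) (hφ' : HasDerivAt φ' φ'' r)
    (hV : HasDerivAt V v (φ r)) (hW : HasDerivAt W w (φ r))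
    (hode : r ^ 4 * φ'' + 2 * r ^ 3 * φ' r = r ^ 2 * v + w / 2) :
    HasDerivAt (fun s => s ^ 4 * φ' s ^ 2 - 2 * s ^ 2 * V (φ s) - W (φ s))
      (-4 * r * V (φ r)) r := by
  have hΦ := (((hasDerivAt_pow 4 r).mul (hφ'.pow 2)).sub
    (((hasDerivAt_pow 2 r).const_mul 2).mul (hV.comp r hφ))).sub (hW.comp r hφ)
  refine hΦ.congr_deriv ?_
  simp only [Function.comp_apply, Pi.pow_apply]
  linear_combination 2 * φ' r * hode

theorem hasDerivAt_sin_sq (x : ℝ) : HasDerivAt (fun x => sin x ^ 2) (sin (2 * x)) x := by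
  refine ((hasDerivAt_sin x).pow 2).congr_deriv ?_
  rw [sin_two_mul]
  ring

theorem hasDerivAt_sub_sin_mul_cos (x : ℝ) :
    HasDerivAt (fun x => x - sin x * cos x) (1 - cos (2 * x)) x := by
  refine ((hasDerivAt_id x).sub ((hasDerivAt_sin x).mul (hasDerivAt_cos x))).congr_deriv ?_
  rw [cos_two_mul]
  nlinarith [sin_sq_add_cos_sq x]

/-- For a C² solution φ of the stationary Adkins-Nappi equation on (0,∞),
    Φ(r) := r²P(r) = r⁴φ'² - 2r²sin²φ - (φ - sin φ cos φ)² satisfies Φ'(r) = -4r sin²φ(r). -/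
theorem stmt3 (φ φ' φ'' : ℝ → ℝ)
    (h1 : ∀ r : ℝ, 0 < r → HasDerivAt φ (φ' r) r)
    (h2 : ∀ r : ℝ, 0 < r → HasDerivAt φ' (φ'' r) r)
    (hode : ∀ r : ℝ, 0 < r →
      φ'' r + (2 / r) * φ' r =
        Real.sin (2 * φ r) / r ^ 2 +
          (φ r - Real.sin (φ r) * Real.cos (φ r)) * (1 - Real.cos (2 * φ r)) / r ^ 4) :
    ∀ r : ℝ, 0 < r →
      HasDerivAt
        (fun r => r ^ 4 * φ' r ^ 2 - 2 * r ^ 2 * Real.sin (φ r) ^ 2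
          - (φ r - Real.sin (φ r) * Real.cos (φ r)) ^ 2)
        (-4 * r * Real.sin (φ r) ^ 2) r := by
  intro r hr
  have hode_r4 : r ^ 4 * φ'' r + 2 * r ^ 3 * φ' r = r ^ 2 * sin (2 * φ r)
      + 2 * (φ r - sin (φ r) * cos (φ r)) * (1 - cos (2 * φ r)) / 2 := by
    have h := hode r hr
    field_simp at h ⊢
    linear_combination h
  have hW : HasDerivAt (fun x => (x - sin x * cos x) ^ 2)
      (2 * (φ r - sin (φ r) * cos (φ r)) * (1 - cos (2 * φ r))) (φ r) :=
    ((hasDerivAt_sub_sin_mul_cos (φ r)).pow 2).congr_deriv (by ring)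
  exact hasDerivAt_energy (h1 r hr) (h2 r hr) (hasDerivAt_sin_sq (φ r)) hW hode_r4
end

section
/- Let φ : (0,∞) → ℝ be a C² solution of φ'' + (2/r)φ' = sin(2φ)/r² + (φ - sin φ cos φ)(1 - cos 2φ)/r⁴ such that: (i) φ(r) = α r⁻² + O(r⁻⁶) and φ'(r) = O(r⁻³) as r → ∞ for some α ∈ ℝ; (ii) lim_{r→0} φ(r) = 0 and lim_{r→0} φ'(r) exists in ℝ. Then φ ≡ 0. -/
open Real Filter Topology Asymptotics Set

/-! The quantity Φ(r) = r⁴φ'² - 2r² sin²φ - (φ - sin φ cos φ)² satisfies Φ' = -4r sin²φ ≤ 0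
along solutions, and the boundary behaviour forces Φ → 0 both as r → 0⁺ and as r → ∞, so
Φ ≡ 0 on (0,∞). Then Φ' ≡ 0 gives sin φ ≡ 0, hence cos φ = ±1 and φ' = 0, and finally
Φ = -φ² = 0. -/

theorem AntitoneOn.eqOn_const_of_tendsto {α β : Type*} [LinearOrder α] [TopologicalSpace α]
    [OrderTopology α] [DenselyOrdered α] [NoMaxOrder α] [LinearOrder β] [TopologicalSpace β]
    [OrderClosedTopology β]
    {f : α → β} {a : α} {c : β} (hf : AntitoneOn f (Ioi a))
    (hleft : Tendsto f (𝓝[>] a) (𝓝 c)) (htop : Tendsto f atTop (𝓝 c)) :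
    EqOn f (fun _ => c) (Ioi a) := by
  intro r (hr : a < r)
  apply le_antisymm
  · refine ge_of_tendsto hleft ?_
    filter_upwards [Ioo_mem_nhdsGT hr] with s hs
    exact hf hs.1 hr hs.2.le
  · have : Nonempty α := ⟨a⟩
    refine le_of_tendsto htop ?_
    filter_upwards [eventually_ge_atTop r] with s hs
    exact hf hr (hr.trans_le hs) hs

theorem HasDerivAt.eq_zero_of_eventuallyEq_const {𝕜 F : Type*} [NontriviallyNormedField 𝕜]
    [NormedAddCommGroup F] [NormedSpace 𝕜 F] {f : 𝕜 → F} {f' c : F} {x : 𝕜}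
    (hf : HasDerivAt f f' x) (hc : f =ᶠ[𝓝 x] fun _ => c) : f' = 0 :=
  hf.unique ((hasDerivAt_const x c).congr_of_eventuallyEq hc)

theorem tendsto_pow_mul_atTop_of_isBigO {f : ℝ → ℝ} {k n : ℕ} (hkn : k < n)
    (hf : f =O[atTop] fun r => 1 / r ^ n) :
    Tendsto (fun r => r ^ k * f r) atTop (𝓝 0) := by
  obtain ⟨m, rfl⟩ : ∃ m, n = k + (m + 1) := ⟨n - k - 1, by omega⟩
  refine ((isBigO_refl (fun r : ℝ => r ^ k) atTop).mul hf).trans_tendsto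
    ((tendsto_pow_neg_atTop (n := m + 1) (by omega)).congr' ?_)
  filter_upwards [eventually_gt_atTop 0] with r hr
  rw [zpow_neg, zpow_natCast]
  field_simp
  ring

namespace AdkinsNappi

noncomputable def Φ (φ φ' : ℝ → ℝ) (r : ℝ) : ℝ :=
  r ^ 4 * φ' r ^ 2 - 2 * r ^ 2 * sin (φ r) ^ 2 - (φ r - sin (φ r) * cos (φ r)) ^ 2

variable {φ φ' φ'' : ℝ → ℝ}

theorem hasDerivAt_Φ {r : ℝ} (hr : r ≠ 0) (hφ : HasDerivAt φ (φ' r) r)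
    (hφ' : HasDerivAt φ' (φ'' r) r)
    (hode : φ'' r + (2 / r) * φ' r =
      sin (2 * φ r) / r ^ 2 + (φ r - sin (φ r) * cos (φ r)) * (1 - cos (2 * φ r)) / r ^ 4) :
    HasDerivAt (Φ φ φ') (-4 * r * sin (φ r) ^ 2) r := by
  have hsin := (hasDerivAt_sin (φ r)).comp r hφ
  have hcos := (hasDerivAt_cos (φ r)).comp r hφ
  have h : HasDerivAt (Φ φ φ') _ r := (((hasDerivAt_pow 4 r).mul (hφ'.pow 2)).sub
    (((hasDerivAt_pow 2 r).const_mul 2).mul (hsin.pow 2))).sub ((hφ.sub (hsin.mul hcos)).pow 2)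
  refine h.congr_deriv ?_
  rw [sin_two_mul, cos_two_mul] at hode
  field_simp at hode
  have hpyth := sin_sq_add_cos_sq (φ r)
  simp only [Pi.pow_apply, Function.comp_apply, Pi.mul_apply, Pi.sub_apply, Nat.cast_ofNat]
  linear_combination (2 * φ' r) * hode - 2 * φ' r * (φ r - sin (φ r) * cos (φ r)) * hpyth

theorem antitoneOn_Φ (hΦ : ∀ r, 0 < r → HasDerivAt (Φ φ φ') (-4 * r * sin (φ r) ^ 2) r) :
    AntitoneOn (Φ φ φ') (Ioi 0) := by
  refine antitoneOn_of_hasDerivWithinAt_nonpos (convex_Ioi 0)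
    (fun r hr => (hΦ r hr).continuousAt.continuousWithinAt)
    (fun r hr => (hΦ r (interior_subset hr)).hasDerivWithinAt) fun r hr => ?_
  have hr : 0 < r := interior_subset hr
  nlinarith [sq_nonneg (sin (φ r))]

theorem tendsto_Φ {l : Filter ℝ} (hφ : Tendsto φ l (𝓝 0))
    (hrφ : Tendsto (fun r => r * φ r) l (𝓝 0))
    (hr2φ' : Tendsto (fun r => r ^ 2 * φ' r) l (𝓝 0)) :
    Tendsto (Φ φ φ') l (𝓝 0) := by
  have hrsin : Tendsto (fun r => r * sin (φ r)) l (𝓝 0) := by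
    refine squeeze_zero_norm (fun r => ?_) (tendsto_norm_zero.comp hrφ)
    simp only [Function.comp_apply, norm_mul]
    gcongr
    exact abs_sin_le_abs
  have hrest : Tendsto (fun r => (φ r - sin (φ r) * cos (φ r)) ^ 2) l (𝓝 0) := by
    have hc : Continuous fun x => (x - sin x * cos x) ^ 2 := by fun_prop
    simpa [Function.comp_def] using (hc.tendsto 0).comp hφ
  have h := ((hr2φ'.pow 2).sub ((hrsin.pow 2).const_mul 2)).sub hrest
  simp only [ne_eq, OfNat.ofNat_ne_zero, not_false_eq_true, zero_pow, mul_zero, sub_self] at h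
  refine h.congr fun r => ?_
  simp only [Φ]
  ring

theorem eq_zero_of_eqOn_Φ (hφ : ∀ r, 0 < r → HasDerivAt φ (φ' r) r)
    (hΦ' : ∀ r, 0 < r → HasDerivAt (Φ φ φ') (-4 * r * sin (φ r) ^ 2) r)
    (hΦ : EqOn (Φ φ φ') 0 (Ioi 0)) {r : ℝ} (hr : 0 < r) : φ r = 0 := by
  have hsin : ∀ s, 0 < s → sin (φ s) = 0 := fun s hs => by
    have := (hΦ' s hs).eq_zero_of_eventuallyEq_const (c := 0)
      ((eventually_gt_nhds hs).mono fun t ht => hΦ ht)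
    simpa [hs.ne'] using this
  have hφ'r : φ' r = 0 := by
    have hd := ((hasDerivAt_sin (φ r)).comp r (hφ r hr)).eq_zero_of_eventuallyEq_const (c := 0)
      ((eventually_gt_nhds hr).mono fun t ht => hsin t ht)
    have hcos : cos (φ r) ≠ 0 := fun h => by
      simpa [hsin r hr, h] using sin_sq_add_cos_sq (φ r)
    exact (mul_eq_zero.1 hd).resolve_left hcos
  have := hΦ hr
  simp only [Φ, hsin r hr, hφ'r] at this
  simpa using this

end AdkinsNappi

/-- A C² solution φ of the stationary Adkins-Nappi equation on (0,∞) with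
    φ(r) = α r⁻² + O(r⁻⁶), φ'(r) = O(r⁻³) as r → ∞, lim_{r→0} φ(r) = 0 and
    lim_{r→0} φ'(r) ∈ ℝ, must vanish identically. -/
theorem stmt4 (φ φ' φ'' : ℝ → ℝ) (α : ℝ)
    (h1 : ∀ r : ℝ, 0 < r → HasDerivAt φ (φ' r) r)
    (h2 : ∀ r : ℝ, 0 < r → HasDerivAt φ' (φ'' r) r)
    (hode : ∀ r : ℝ, 0 < r →
      φ'' r + (2 / r) * φ' r =
        Real.sin (2 * φ r) / r ^ 2 +
          (φ r - Real.sin (φ r) * Real.cos (φ r)) * (1 - Real.cos (2 * φ r)) / r ^ 4)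
    (hasym : (fun r : ℝ => φ r - α / r ^ 2) =O[atTop] fun r : ℝ => 1 / r ^ 6)
    (hasym' : φ' =O[atTop] fun r : ℝ => 1 / r ^ 3)
    (hlim0 : Tendsto φ (𝓝[>] 0) (𝓝 0))
    (hlim0' : ∃ β : ℝ, Tendsto φ' (𝓝[>] 0) (𝓝 β)) :
    ∀ r : ℝ, 0 < r → φ r = 0 := by
  obtain ⟨β, hβ⟩ := hlim0'
  have hΦderiv : ∀ r, 0 < r → HasDerivAt (AdkinsNappi.Φ φ φ') (-4 * r * sin (φ r) ^ 2) r :=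
    fun r hr => AdkinsNappi.hasDerivAt_Φ hr.ne' (h1 r hr) (h2 r hr) (hode r hr)
  have hφ : φ =O[atTop] fun r => 1 / r ^ 2 := by
    have h62 : (fun r : ℝ => 1 / r ^ 6) =O[atTop] fun r => 1 / r ^ 2 := by
      simpa only [one_div] using
        (isLittleO_pow_pow_atTop_of_lt (𝕜 := ℝ) (by norm_num : 2 < 6)).isBigO.inv_rev
          (Eventually.of_forall fun r h => by simpa using h)
    simpa [div_eq_mul_inv] using
      (hasym.trans h62).add ((isBigO_refl (fun r : ℝ => 1 / r ^ 2) atTop).const_mul_left α)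
  have hΦtop : Tendsto (AdkinsNappi.Φ φ φ') atTop (𝓝 0) :=
    AdkinsNappi.tendsto_Φ (by simpa using tendsto_pow_mul_atTop_of_isBigO (k := 0) two_pos hφ)
      (by simpa using tendsto_pow_mul_atTop_of_isBigO (k := 1) one_lt_two hφ)
      (tendsto_pow_mul_atTop_of_isBigO (by norm_num) hasym')
  have hid : Tendsto (fun r : ℝ => r) (𝓝[>] 0) (𝓝 0) :=
    tendsto_nhdsWithin_of_tendsto_nhds tendsto_id
  have hΦzero : Tendsto (AdkinsNappi.Φ φ φ') (𝓝[>] 0) (𝓝 0) :=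
    AdkinsNappi.tendsto_Φ hlim0 (by simpa using hid.mul hlim0) (by simpa using (hid.pow 2).mul hβ)
  exact fun r hr => AdkinsNappi.eq_zero_of_eqOn_Φ h1 hΦderiv
    ((AdkinsNappi.antitoneOn_Φ hΦderiv).eqOn_const_of_tendsto hΦzero hΦtop) hr
end

section
/- Define f(x) = (x - sin x cos x)(1 - cos 2x). There is an absolute constant C such that for all a, b ∈ ℝ: |f(a+b) - f(a) - f(b)| ≤ C(|a|⁴|b| + |a|³|b|² + |a|²|b|³ + |a||b|⁴). -/
open Real Metric

/-!
Since `sin x cos x = sin (2x) / 2`, we have `f x = g (2x) / 2` with `g y = (y - sin y)(1 - cos y)`.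
As `g 0 = 0`, the defect `f (a + b) - f a - f b` is a second difference of `g`, bounded by
`|2a| |2b|` times the supremum of `|g''|` on `[-2(|a| + |b|), 2(|a| + |b|)]`. From
`|y - sin y| ≤ |y|³/6` and `0 ≤ 1 - cos y ≤ y²/2` one gets `|g'' y| ≤ 2|y|³` for all `y`,
hence the defect is at most `32 (|a| + |b|)³ |a| |b|`.
-/

theorem norm_second_difference_le {E : Type*} [NormedAddCommGroup E] [NormedSpace ℝ E]
    {F F' F'' : ℝ → E} (hF : ∀ x, HasDerivAt F (F' x) x) (hF' : ∀ x, HasDerivAt F' (F'' x) x)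
    {a b M : ℝ} (hM : ∀ x, |x| ≤ |a| + |b| → ‖F'' x‖ ≤ M) :
    ‖F (a + b) - F a - F b + F 0‖ ≤ M * |a| * |b| := by
  have hF'_sub : ∀ t, |t| ≤ |a| → ‖F' (t + b) - F' t‖ ≤ M * |b| := by
    intro t ht
    have hmem : ∀ x, |x| ≤ |a| + |b| → x ∈ closedBall (0 : ℝ) (|a| + |b|) := by
      simp [Real.norm_eq_abs]
    simpa using (convex_closedBall (0 : ℝ) (|a| + |b|)).norm_image_sub_le_of_norm_hasDerivWithin_le
      (fun x _ => (hF' x).hasDerivWithinAt) (fun x hx => hM x (by simpa using hx))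
      (hmem t (by linarith [abs_nonneg b])) (hmem (t + b) (by linarith [abs_add_le t b]))
  have hshift : ∀ t, HasDerivAt (fun t => F (t + b) - F t) (F' (t + b) - F' t) t := fun t =>
    ((hF (t + b)).comp_add_const t b).sub (hF t)
  have := (convex_closedBall (0 : ℝ) |a|).norm_image_sub_le_of_norm_hasDerivWithin_le
    (fun t _ => (hshift t).hasDerivWithinAt) (fun t ht => hF'_sub t (by simpa using ht))
    (mem_closedBall_self (abs_nonneg a)) (by simp : a ∈ closedBall (0 : ℝ) |a|)
  calc ‖F (a + b) - F a - F b + F 0‖ = ‖(F (a + b) - F a) - (F (0 + b) - F 0)‖ := by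
        rw [zero_add, sub_sub_sub_eq]; congr 1; abel
    _ ≤ M * |b| * ‖a - 0‖ := this
    _ = M * |a| * |b| := by rw [sub_zero, Real.norm_eq_abs]; ring

noncomputable def quinticProfile (y : ℝ) : ℝ := (y - sin y) * (1 - cos y)

theorem hasDerivAt_quinticProfile (y : ℝ) :
    HasDerivAt quinticProfile ((1 - cos y) ^ 2 + (y - sin y) * sin y) y := by
  have := ((hasDerivAt_id' y).fun_sub (hasDerivAt_sin y)).fun_mul
    ((hasDerivAt_const y 1).fun_sub (hasDerivAt_cos y))
  exact this.congr_deriv (by ring)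

theorem hasDerivAt_quinticProfile_deriv (y : ℝ) :
    HasDerivAt (fun y => (1 - cos y) ^ 2 + (y - sin y) * sin y)
      (3 * sin y * (1 - cos y) + (y - sin y) * cos y) y := by
  have := (((hasDerivAt_const y 1).fun_sub (hasDerivAt_cos y)).fun_pow 2).fun_add
    (((hasDerivAt_id' y).fun_sub (hasDerivAt_sin y)).fun_mul (hasDerivAt_sin y))
  exact this.congr_deriv (by ring)

theorem abs_quinticProfile_deriv2_le (y : ℝ) :
    |3 * sin y * (1 - cos y) + (y - sin y) * cos y| ≤ 2 * |y| ^ 3 := by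
  have hsin : |sin y| ≤ |y| := abs_sin_le_abs
  have hcos : |1 - cos y| ≤ y ^ 2 / 2 := by
    rw [abs_of_nonneg (by linarith [cos_le_one y])]
    linarith [one_sub_sq_div_two_le_cos (x := y)]
  calc |3 * sin y * (1 - cos y) + (y - sin y) * cos y|
      ≤ 3 * |sin y| * |1 - cos y| + |y - sin y| * |cos y| := by
        refine (abs_add_le _ _).trans_eq ?_
        rw [abs_mul, abs_mul, abs_mul, abs_of_pos (by norm_num : (0:ℝ) < 3)]
    _ ≤ 3 * |y| * (y ^ 2 / 2) + |y| ^ 3 / 6 * 1 := by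
        gcongr
        · exact abs_sub_sin_le y
        · exact abs_cos_le_one y
    _ ≤ 2 * |y| ^ 3 := by
        rw [← sq_abs y]; nlinarith [pow_nonneg (abs_nonneg y) 3]

theorem add_pow_three_mul_mul_le {p q : ℝ} (hp : 0 ≤ p) (hq : 0 ≤ q) :
    (p + q) ^ 3 * p * q ≤ 3 * (p ^ 4 * q + p ^ 3 * q ^ 2 + p ^ 2 * q ^ 3 + p * q ^ 4) := by
  nlinarith [mul_nonneg (pow_nonneg hp 4) hq, mul_nonneg hp (pow_nonneg hq 4)]

/-- For f(x) = (x - sin x cos x)(1 - cos 2x):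
    |f(a+b) - f(a) - f(b)| ≤ C(|a|⁴|b| + |a|³|b|² + |a|²|b|³ + |a||b|⁴). -/
theorem stmt11 (f : ℝ → ℝ)
    (hf : ∀ x : ℝ, f x = (x - Real.sin x * Real.cos x) * (1 - Real.cos (2 * x))) :
    ∃ C : ℝ, 0 < C ∧ ∀ a b : ℝ,
      |f (a + b) - f a - f b| ≤
        C * (|a| ^ 4 * |b| + |a| ^ 3 * |b| ^ 2 + |a| ^ 2 * |b| ^ 3 + |a| * |b| ^ 4) := by
  have hf_eq : ∀ x, f x = quinticProfile (2 * x) / 2 := fun x => by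
    rw [hf, quinticProfile, sin_two_mul]; ring
  refine ⟨96, by norm_num, fun a b => ?_⟩
  have hsecond := norm_second_difference_le hasDerivAt_quinticProfile
    hasDerivAt_quinticProfile_deriv (a := 2 * a) (b := 2 * b) (M := 2 * (2 * |a| + 2 * |b|) ^ 3)
    fun x hx => (abs_quinticProfile_deriv2_le x).trans (by
      simp only [abs_mul, abs_two] at hx; gcongr)
  have hzero : quinticProfile 0 = 0 := by simp [quinticProfile]
  have hdiff : f (a + b) - f a - f b = (quinticProfile (2 * a + 2 * b) - quinticProfile (2 * a)
      - quinticProfile (2 * b) + quinticProfile 0) / 2 := by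
    rw [hf_eq, hf_eq, hf_eq, hzero, mul_add]; ring
  calc |f (a + b) - f a - f b|
      = ‖quinticProfile (2 * a + 2 * b) - quinticProfile (2 * a) - quinticProfile (2 * b)
          + quinticProfile 0‖ / 2 := by rw [hdiff, abs_div, abs_two, Real.norm_eq_abs]
    _ ≤ 2 * (2 * |a| + 2 * |b|) ^ 3 * |2 * a| * |2 * b| / 2 := by gcongr
    _ = 32 * ((|a| + |b|) ^ 3 * |a| * |b|) := by rw [abs_mul, abs_mul, abs_two]; ring
    _ ≤ 96 * (|a| ^ 4 * |b| + |a| ^ 3 * |b| ^ 2 + |a| ^ 2 * |b| ^ 3 + |a| * |b| ^ 4) := by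
        linarith [add_pow_three_mul_mul_le (abs_nonneg a) (abs_nonneg b)]
end

section
/- Let a > 0 and let P(a) be the plane {(c₁ r⁻³, c₂ r⁻³) : c₁, c₂ ∈ ℝ} in Ḣ¹ × L²(r > a) of radial functions on ℝ⁵. The orthogonal projection π_a onto P(a) is given by π_a(f,0) = (a³ r⁻³ f(a), 0) and π_a(0,g) = (0, a r⁻³ ∫_a^∞ g(ρ) ρ dρ), and consequently ‖π_a(f,g)‖²_{Ḣ¹×L²(r>a)} = 3a³ f(a)² + a (∫_a^∞ ρ g(ρ) dρ)². -/
open Real MeasureTheory Filter Set Topology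

/-!
Expanding the integrands, both orthogonality relations and the norm identity reduce to
`∫ₐ^∞ r⁻⁴ dr = 1/(3a³)`, `∫ₐ^∞ r⁻² dr = 1/a` and, since `f` decays at infinity,
`∫ₐ^∞ f' = -f(a)`. The last needs `f' ∈ L¹(a, ∞)`, which follows from
`|f'| ≤ (f'² r⁴ + r⁻⁴) / 2`.
-/

lemma inv_pow_eq_rpow_neg (r : ℝ) (n : ℕ) : (r ^ n)⁻¹ = r ^ (-(n : ℝ)) := by
  rw [rpow_neg_natCast, zpow_neg, zpow_natCast]

lemma integrableOn_Ioi_inv_pow {a : ℝ} (ha : 0 < a) {n : ℕ} (hn : 2 ≤ n) :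
    IntegrableOn (fun r : ℝ => (r ^ n)⁻¹) (Ioi a) := by
  have hlt : -(n : ℝ) < -1 := by
    have : (2 : ℝ) ≤ n := by exact_mod_cast hn
    linarith
  simpa only [inv_pow_eq_rpow_neg] using integrableOn_Ioi_rpow_of_lt hlt ha

lemma integral_Ioi_inv_pow {a : ℝ} (ha : 0 < a) {n : ℕ} (hn : 2 ≤ n) :
    ∫ r in Ioi a, (r ^ n)⁻¹ = ((n - 1) * a ^ (n - 1))⁻¹ := by
  obtain ⟨m, rfl⟩ : ∃ m, n = m + 1 := ⟨n - 1, by omega⟩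
  have hm : (0 : ℝ) < m := by exact_mod_cast (by omega : 0 < m)
  simp only [inv_pow_eq_rpow_neg]
  rw [integral_Ioi_rpow_of_lt (by push_cast; linarith) ha]
  have hexp : -((m + 1 : ℕ) : ℝ) + 1 = -(m : ℝ) := by push_cast; ring
  rw [hexp, rpow_neg ha.le, rpow_natCast, Nat.add_sub_cancel]
  push_cast
  rw [add_sub_cancel_right]
  field_simp

lemma MeasureTheory.Integrable.of_sq_mul_of_inv {α : Type*} [MeasurableSpace α] {μ : Measure α} {u w : α → ℝ}
    (hu : AEStronglyMeasurable u μ) (hw : ∀ᵐ x ∂μ, 0 < w x)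
    (huw : Integrable (fun x => u x ^ 2 * w x) μ) (hw_inv : Integrable (fun x => (w x)⁻¹) μ) :
    Integrable u μ := by
  refine ((huw.add hw_inv).div_const 2).mono' hu ?_
  filter_upwards [hw] with x hx
  -- `2 |u| ≤ u² w + w⁻¹` is `(|u| w - 1)² ≥ 0` divided by `w`
  have key : 2 * |u x| * w x ≤ u x ^ 2 * w x ^ 2 + 1 := by
    nlinarith [sq_nonneg (|u x| * w x - 1), sq_abs (u x)]
  rw [Real.norm_eq_abs, le_div_iff₀ two_pos, ← mul_le_mul_iff_left₀ hx]
  calc |u x| * 2 * w x = 2 * |u x| * w x := by ring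
    _ ≤ u x ^ 2 * w x ^ 2 + 1 := key
    _ = (u x ^ 2 * w x + (w x)⁻¹) * w x := by field_simp

lemma aestronglyMeasurable_of_hasDerivAt {f f' : ℝ → ℝ} {s : Set ℝ} (hs : MeasurableSet s)
    (hf : ∀ r ∈ s, HasDerivAt f (f' r) r) : AEStronglyMeasurable f' (volume.restrict s) := by
  refine (measurable_deriv f).aestronglyMeasurable.congr ?_
  filter_upwards [ae_restrict_mem hs] with r hr
  exact (hf r hr).deriv

section WeightedIntegrals

variable {a : ℝ} (ha : 0 < a)
include ha

lemma integral_Ioi_sub_inv_pow_four_mul {φ : ℝ → ℝ} (hφ : IntegrableOn φ (Ioi a)) (x c : ℝ) :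
    ∫ r in Ioi a, ((φ r - (-3 * a ^ 3 * x / r ^ 4)) * (-3 * c / r ^ 4)) * r ^ 4
      = -3 * c * ((∫ r in Ioi a, φ r) + x) := by
  have hexpand : ∀ r ∈ Ioi a, ((φ r - (-3 * a ^ 3 * x / r ^ 4)) * (-3 * c / r ^ 4)) * r ^ 4
      = -3 * c * φ r + -9 * c * a ^ 3 * x * (r ^ 4)⁻¹ := by
    intro r hr
    have : r ≠ 0 := (ha.trans hr).ne'
    field_simp
    ring
  rw [setIntegral_congr_fun measurableSet_Ioi hexpand,
    integral_add (hφ.const_mul _) ((integrableOn_Ioi_inv_pow ha (by norm_num)).const_mul _),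
    integral_const_mul, integral_const_mul, integral_Ioi_inv_pow ha (by norm_num)]
  field_simp
  norm_num
  ring

lemma integral_Ioi_sub_div_pow_three_mul {ψ : ℝ → ℝ}
    (hψ : IntegrableOn (fun r => ψ r * r) (Ioi a)) (y c : ℝ) :
    ∫ r in Ioi a, ((ψ r - a * y / r ^ 3) * (c / r ^ 3)) * r ^ 4
      = c * ((∫ r in Ioi a, ψ r * r) - y) := by
  have hexpand : ∀ r ∈ Ioi a, ((ψ r - a * y / r ^ 3) * (c / r ^ 3)) * r ^ 4
      = c * (ψ r * r) + -(c * a * y) * (r ^ 2)⁻¹ := by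
    intro r hr
    have : r ≠ 0 := (ha.trans hr).ne'
    field_simp
    ring
  rw [setIntegral_congr_fun measurableSet_Ioi hexpand,
    integral_add (hψ.const_mul _) ((integrableOn_Ioi_inv_pow ha le_rfl).const_mul _),
    integral_const_mul, integral_const_mul, integral_Ioi_inv_pow ha le_rfl]
  field_simp
  norm_num
  ring

lemma integral_Ioi_sq_div_pow_four_mul (b : ℝ) :
    ∫ r in Ioi a, (b / r ^ 4) ^ 2 * r ^ 4 = b ^ 2 / (3 * a ^ 3) := by
  have hsimp : ∀ r ∈ Ioi a, (b / r ^ 4) ^ 2 * r ^ 4 = b ^ 2 * (r ^ 4)⁻¹ := by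
    intro r hr
    have : r ≠ 0 := (ha.trans hr).ne'
    field_simp
  rw [setIntegral_congr_fun measurableSet_Ioi hsimp, integral_const_mul,
    integral_Ioi_inv_pow ha (by norm_num)]
  norm_num
  ring

lemma integral_Ioi_sq_div_pow_three_mul (b : ℝ) :
    ∫ r in Ioi a, (b / r ^ 3) ^ 2 * r ^ 4 = b ^ 2 / a := by
  have hsimp : ∀ r ∈ Ioi a, (b / r ^ 3) ^ 2 * r ^ 4 = b ^ 2 * (r ^ 2)⁻¹ := by
    intro r hr
    have : r ≠ 0 := (ha.trans hr).ne'
    field_simp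
  rw [setIntegral_congr_fun measurableSet_Ioi hsimp, integral_const_mul,
    integral_Ioi_inv_pow ha le_rfl]
  norm_num
  ring

end WeightedIntegrals

theorem stmt13_general (a : ℝ) (ha : 0 < a) (f f' g : ℝ → ℝ)
    (hf : ∀ r : ℝ, a ≤ r → HasDerivAt f (f' r) r)
    (hf2 : IntegrableOn (fun r => f' r ^ 2 * r ^ 4) (Ioi a))
    (hflim : Tendsto f atTop (nhds 0))
    (hg1 : IntegrableOn (fun r => g r * r) (Ioi a)) :
    -- orthogonality of f - a³r⁻³f(a) to every c·r⁻³ in Ḣ¹(r>a):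
    (∀ c : ℝ, ∫ r in Ioi a,
        ((f' r - (-3 * a ^ 3 * f a / r ^ 4)) * (-3 * c / r ^ 4)) * r ^ 4 = 0) ∧
    -- orthogonality of g - a r⁻³ ∫ₐ^∞ gρ dρ to every c·r⁻³ in L²(r>a):
    (∀ c : ℝ, ∫ r in Ioi a,
        ((g r - a * (∫ ρ in Ioi a, g ρ * ρ) / r ^ 3) * (c / r ^ 3)) * r ^ 4 = 0) ∧
    -- norm of the projection:
    ((∫ r in Ioi a, (-3 * a ^ 3 * f a / r ^ 4) ^ 2 * r ^ 4)
        + (∫ r in Ioi a, (a * (∫ ρ in Ioi a, g ρ * ρ) / r ^ 3) ^ 2 * r ^ 4)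
      = 3 * a ^ 3 * (f a) ^ 2 + a * (∫ ρ in Ioi a, g ρ * ρ) ^ 2) := by
  have hf' : IntegrableOn f' (Ioi a) :=
    Integrable.of_sq_mul_of_inv (w := fun r => r ^ 4)
      (aestronglyMeasurable_of_hasDerivAt measurableSet_Ioi fun r hr => hf r hr.le)
      (ae_restrict_of_forall_mem measurableSet_Ioi fun r hr => pow_pos (ha.trans hr) 4)
      hf2 (integrableOn_Ioi_inv_pow ha (by norm_num))
  have hftc : ∫ r in Ioi a, f' r = -f a := by
    simpa using integral_Ioi_of_hasDerivAt_of_tendsto (hf a le_rfl).continuousAt.continuousWithinAt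
      (fun r hr => hf r hr.le) hf' hflim
  refine ⟨fun c => ?_, fun c => ?_, ?_⟩
  · rw [integral_Ioi_sub_inv_pow_four_mul ha hf', hftc]
    ring
  · rw [integral_Ioi_sub_div_pow_three_mul ha hg1]
    ring
  · rw [integral_Ioi_sq_div_pow_four_mul ha, integral_Ioi_sq_div_pow_three_mul ha]
    field_simp

/-- The orthogonal projection onto the plane P(a) = {(c₁r⁻³, c₂r⁻³)} in Ḣ¹ × L²(r > a):
    π_a(f,g) = (a³r⁻³f(a), a r⁻³ ∫ₐ^∞ gρ dρ).  The difference is orthogonal to P(a)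
    and ‖π_a(f,g)‖² = 3a³f(a)² + a(∫ₐ^∞ ρg dρ)². -/
theorem stmt13 (a : ℝ) (ha : 0 < a) (f f' g : ℝ → ℝ)
    (hf : ∀ r : ℝ, a ≤ r → HasDerivAt f (f' r) r)
    (hf2 : IntegrableOn (fun r => f' r ^ 2 * r ^ 4) (Ioi a))
    (hflim : Tendsto f atTop (nhds 0))
    (hg2 : IntegrableOn (fun r => g r ^ 2 * r ^ 4) (Ioi a))
    (hg1 : IntegrableOn (fun r => g r * r) (Ioi a)) :
    -- orthogonality of f - a³r⁻³f(a) to every c·r⁻³ in Ḣ¹(r>a):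
    (∀ c : ℝ, ∫ r in Ioi a,
        ((f' r - (-3 * a ^ 3 * f a / r ^ 4)) * (-3 * c / r ^ 4)) * r ^ 4 = 0) ∧
    -- orthogonality of g - a r⁻³ ∫ₐ^∞ gρ dρ to every c·r⁻³ in L²(r>a):
    (∀ c : ℝ, ∫ r in Ioi a,
        ((g r - a * (∫ ρ in Ioi a, g ρ * ρ) / r ^ 3) * (c / r ^ 3)) * r ^ 4 = 0) ∧
    -- norm of the projection:
    ((∫ r in Ioi a, (-3 * a ^ 3 * f a / r ^ 4) ^ 2 * r ^ 4)
        + (∫ r in Ioi a, (a * (∫ ρ in Ioi a, g ρ * ρ) / r ^ 3) ^ 2 * r ^ 4)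
      = 3 * a ^ 3 * (f a) ^ 2 + a * (∫ ρ in Ioi a, g ρ * ρ) ^ 2) :=
  stmt13_general a ha f f' g hf hf2 hflim hg1
end

section
/- Suppose (v₀, v₁) : [R₁,∞) → ℝ² (with R₁ ≥ 1) satisfy, for some constant C₁ and all R₁ ≤ r ≤ r' ≤ 2r: |v₀(r) - v₀(r')| ≤ C₁ δ (r⁻¹|v₀(r)| + |v₁(r)|) and |v₁(r) - v₁(r')| ≤ C₁ δ (r⁻²|v₀(r)| + r⁻¹|v₁(r)|), where δ > 0 satisfies (1 + 2C₁δ) ≤ 2^{1/6}. Then |v₀(r)| + |v₁(r)| ≤ C r^{1/6} for all r ≥ R₁, with C depending on R₁, v₀(R₁), v₁(R₁). -/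
/-- Dyadic iteration: from the difference estimates with small δ (so that 1 + 2C₁δ ≤ 2^{1/6}),
    one gets the growth bound |v₀(r)| + |v₁(r)| ≤ C r^{1/6} for r ≥ R₁. -/
theorem stmt16 (R₁ C₁ δ : ℝ) (v₀ v₁ : ℝ → ℝ)
    (hR : 1 ≤ R₁) (hδ : 0 < δ)
    (hsmall : 1 + 2 * C₁ * δ ≤ (2:ℝ) ^ ((1:ℝ) / 6))
    (h0 : ∀ r r' : ℝ, R₁ ≤ r → r ≤ r' → r' ≤ 2 * r →
      |v₀ r - v₀ r'| ≤ C₁ * δ * (r⁻¹ * |v₀ r| + |v₁ r|))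
    (h1 : ∀ r r' : ℝ, R₁ ≤ r → r ≤ r' → r' ≤ 2 * r →
      |v₁ r - v₁ r'| ≤ C₁ * δ * (r⁻¹ ^ 2 * |v₀ r| + r⁻¹ * |v₁ r|)) :
    ∃ C : ℝ, ∀ r : ℝ, R₁ ≤ r → |v₀ r| + |v₁ r| ≤ C * r ^ ((1:ℝ) / 6) := by
  set K : ℝ := (2:ℝ) ^ ((1:ℝ) / 6) with hK
  have hK1 : (1:ℝ) ≤ K := by
    have h := Real.rpow_le_rpow_of_exponent_le (one_le_two) (by norm_num : (0:ℝ) ≤ 1/6)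
    rwa [Real.rpow_zero] at h
  have hK0 : (0:ℝ) ≤ K := by linarith
  set c : ℝ := max (C₁ * δ) 0 with hc
  have hc0 : 0 ≤ c := le_max_right _ _
  have hcK : 1 + 2 * c ≤ K := by
    rcases le_or_gt 0 (C₁ * δ) with h | h
    · have : c = C₁ * δ := max_eq_left h
      rw [this]; linarith [hsmall]
    · have : c = 0 := max_eq_right h.le
      rw [this]; linarith
  -- one dyadic step
  have step : ∀ s t : ℝ, R₁ ≤ s → s ≤ t → t ≤ 2 * s →
      |v₀ t| + |v₁ t| ≤ K * (|v₀ s| + |v₁ s|) := by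
    intro s t hs hst ht2
    have hs1 : (1:ℝ) ≤ s := le_trans hR hs
    have hs0 : (0:ℝ) < s := by linarith
    have hsi : s⁻¹ ≤ 1 := by
      rw [inv_le_one_iff₀]; right; exact hs1
    have hsi0 : (0:ℝ) ≤ s⁻¹ := inv_nonneg.2 hs0.le
    have ha : (0:ℝ) ≤ |v₀ s| := abs_nonneg _
    have hb : (0:ℝ) ≤ |v₁ s| := abs_nonneg _
    have br0 : (0:ℝ) ≤ s⁻¹ * |v₀ s| + |v₁ s| := by positivity
    have br1 : (0:ℝ) ≤ s⁻¹ ^ 2 * |v₀ s| + s⁻¹ * |v₁ s| := by positivity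
    have e0 : |v₀ s - v₀ t| ≤ c * (s⁻¹ * |v₀ s| + |v₁ s|) :=
      le_trans (h0 s t hs hst ht2) (mul_le_mul_of_nonneg_right (le_max_left _ _) br0)
    have e1 : |v₁ s - v₁ t| ≤ c * (s⁻¹ ^ 2 * |v₀ s| + s⁻¹ * |v₁ s|) :=
      le_trans (h1 s t hs hst ht2) (mul_le_mul_of_nonneg_right (le_max_left _ _) br1)
    have t0 : |v₀ t| ≤ |v₀ s| + |v₀ s - v₀ t| := by
      have := abs_sub_abs_le_abs_sub (v₀ t) (v₀ s)
      have h' : |v₀ t - v₀ s| = |v₀ s - v₀ t| := abs_sub_comm _ _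
      linarith [this, h'.le, h'.ge]
    have t1 : |v₁ t| ≤ |v₁ s| + |v₁ s - v₁ t| := by
      have := abs_sub_abs_le_abs_sub (v₁ t) (v₁ s)
      have h' : |v₁ t - v₁ s| = |v₁ s - v₁ t| := abs_sub_comm _ _
      linarith [this, h'.le, h'.ge]
    have hsq : s⁻¹ ^ 2 ≤ 1 := by nlinarith
    have b0 : c * (s⁻¹ * |v₀ s| + |v₁ s|) ≤ c * (|v₀ s| + |v₁ s|) := by
      apply mul_le_mul_of_nonneg_left _ hc0
      nlinarith
    have b1 : c * (s⁻¹ ^ 2 * |v₀ s| + s⁻¹ * |v₁ s|) ≤ c * (|v₀ s| + |v₁ s|) := by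
      apply mul_le_mul_of_nonneg_left _ hc0
      nlinarith
    have : |v₀ t| + |v₁ t| ≤ (1 + 2 * c) * (|v₀ s| + |v₁ s|) := by nlinarith
    calc |v₀ t| + |v₁ t| ≤ (1 + 2 * c) * (|v₀ s| + |v₁ s|) := this
      _ ≤ K * (|v₀ s| + |v₁ s|) := mul_le_mul_of_nonneg_right hcK (by positivity)
  have hR0 : (0:ℝ) < R₁ := by linarith
  -- the dyadic iteration
  have key : ∀ n : ℕ, ∀ r : ℝ, R₁ ≤ r → r ≤ 2 ^ n * R₁ →
      |v₀ r| + |v₁ r| ≤ K ^ n * (|v₀ R₁| + |v₁ R₁|) := by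
    intro n
    induction n with
    | zero =>
      intro r hr hr2
      have : r = R₁ := le_antisymm (by simpa using hr2) hr
      simp [this]
    | succ n ih =>
      intro r hr hr2
      set s : ℝ := max (r / 2) R₁ with hs
      have hsR : R₁ ≤ s := le_max_right _ _
      have hr0 : (0:ℝ) ≤ r := by linarith
      have hsr : s ≤ r := max_le (by linarith) hr
      have hr2s : r ≤ 2 * s := by
        have : r / 2 ≤ s := le_max_left _ _
        linarith
      have hsn : s ≤ 2 ^ n * R₁ := by
        apply max_le
        · have : (2:ℝ) ^ (n+1) = 2 * 2 ^ n := by ring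
          rw [this] at hr2; linarith
        · nlinarith [one_le_pow₀ (one_le_two (α := ℝ)) (n := n)]
      have h1' := step s r hsR hsr hr2s
      have h2' := ih s hsR hsn
      calc |v₀ r| + |v₁ r| ≤ K * (|v₀ s| + |v₁ s|) := h1'
        _ ≤ K * (K ^ n * (|v₀ R₁| + |v₁ R₁|)) := mul_le_mul_of_nonneg_left h2' hK0
        _ = K ^ (n + 1) * (|v₀ R₁| + |v₁ R₁|) := by ring
  refine ⟨(2 / R₁) ^ ((1:ℝ)/6) * (|v₀ R₁| + |v₁ R₁|), fun r hr => ?_⟩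
  have hx : (1:ℝ) ≤ r / R₁ := (one_le_div hR0).2 hr
  obtain ⟨n, hn1, hn2⟩ := exists_nat_pow_near hx one_lt_two
  have hrle : r ≤ 2 ^ (n + 1) * R₁ := by
    have := (div_lt_iff₀ hR0).1 hn2
    linarith
  have hmain := key (n + 1) r hr hrle
  have hr0 : (0:ℝ) < r := by linarith
  -- bound K^(n+1) by (2/R₁)^(1/6) * r^(1/6)
  have hpow : K ^ (n + 1) ≤ (2 / R₁) ^ ((1:ℝ)/6) * r ^ ((1:ℝ)/6) := by
    have e1 : K ^ (n + 1) = ((2:ℝ) ^ (n + 1 : ℕ)) ^ ((1:ℝ)/6) := by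
      rw [hK, ← Real.rpow_natCast ((2:ℝ) ^ ((1:ℝ)/6)) (n+1),
        ← Real.rpow_natCast (2:ℝ) (n+1), ← Real.rpow_mul (by norm_num),
        ← Real.rpow_mul (by norm_num), mul_comm]
    have h2n : (2:ℝ) ^ (n + 1 : ℕ) ≤ 2 / R₁ * r := by
      have : (2:ℝ) ^ (n + 1 : ℕ) = 2 * 2 ^ n := by ring
      rw [this]
      have h' : (2:ℝ) ^ n ≤ r / R₁ := hn1
      calc (2:ℝ) * 2 ^ n ≤ 2 * (r / R₁) := by linarith
        _ = 2 / R₁ * r := by field_simp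
    have := Real.rpow_le_rpow (by positivity) h2n (by norm_num : (0:ℝ) ≤ 1/6)
    rw [e1]
    calc ((2:ℝ) ^ (n + 1 : ℕ)) ^ ((1:ℝ)/6) ≤ (2 / R₁ * r) ^ ((1:ℝ)/6) := this
      _ = (2 / R₁) ^ ((1:ℝ)/6) * r ^ ((1:ℝ)/6) := Real.mul_rpow (by positivity) hr0.le
  have habs : (0:ℝ) ≤ |v₀ R₁| + |v₁ R₁| := by positivity
  calc |v₀ r| + |v₁ r| ≤ K ^ (n + 1) * (|v₀ R₁| + |v₁ R₁|) := hmain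
    _ ≤ (2 / R₁) ^ ((1:ℝ)/6) * r ^ ((1:ℝ)/6) * (|v₀ R₁| + |v₁ R₁|) :=
        mul_le_mul_of_nonneg_right hpow habs
    _ = (2 / R₁) ^ ((1:ℝ)/6) * (|v₀ R₁| + |v₁ R₁|) * r ^ ((1:ℝ)/6) := by ring
end

section
/- Suppose v⃗ : [R₂,∞) → ℝ² satisfies |v⃗(r) - v⃗(r')| ≤ C r⁻⁴ |v⃗(r)| for all R₂ ≤ r ≤ r' ≤ 2r (with R₂ large enough that C R₂⁻⁴ ≤ 1/4), and |v⃗(r)| ≤ D r⁻² for all r ≥ R₂. Then v⃗(r) = 0 for all r ≥ R₂. -/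
/-- If v⃗ : [R₂,∞) → ℝ² satisfies |v⃗(r) - v⃗(r')| ≤ C r⁻⁴|v⃗(r)| for R₂ ≤ r ≤ r' ≤ 2r
    (with C R₂⁻⁴ ≤ 1/4) and |v⃗(r)| ≤ D r⁻², then v⃗ ≡ 0 on [R₂,∞). -/
theorem stmt18 (R₂ C D : ℝ) (v : ℝ → EuclideanSpace ℝ (Fin 2))
    (hR : 0 < R₂) (hC : 0 ≤ C) (hsmall : C / R₂ ^ 4 ≤ 1 / 4)
    (hdiff : ∀ r r' : ℝ, R₂ ≤ r → r ≤ r' → r' ≤ 2 * r →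
      ‖v r - v r'‖ ≤ C / r ^ 4 * ‖v r‖)
    (hdecay : ∀ r : ℝ, R₂ ≤ r → ‖v r‖ ≤ D / r ^ 2) :
    ∀ r : ℝ, R₂ ≤ r → v r = 0 := by
  intro r hr
  by_contra hne
  have hnorm : 0 < ‖v r‖ := norm_pos_iff.mpr hne
  have hrpos : 0 < r := lt_of_lt_of_le hR hr
  have key : ∀ n : ℕ, (3 / 4 : ℝ) ^ n * ‖v r‖ ≤ ‖v (2 ^ n * r)‖ := by
    intro n
    induction n with
    | zero => simp
    | succ n ih =>
      have h2n : (1 : ℝ) ≤ 2 ^ n := one_le_pow₀ (by norm_num)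
      have hsr : r ≤ 2 ^ n * r := le_mul_of_one_le_left hrpos.le h2n
      have hsR : R₂ ≤ 2 ^ n * r := le_trans hr hsr
      have hspos : 0 < (2 : ℝ) ^ n * r := lt_of_lt_of_le hR hsR
      have hd := hdiff (2 ^ n * r) (2 * (2 ^ n * r)) hsR
        (le_mul_of_one_le_left hspos.le (by norm_num)) le_rfl
      have hCle : C / (2 ^ n * r) ^ 4 ≤ 1 / 4 := by
        refine le_trans ?_ hsmall
        gcongr
      have hd' : ‖v (2 ^ n * r) - v (2 * (2 ^ n * r))‖ ≤ 1 / 4 * ‖v (2 ^ n * r)‖ :=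
        le_trans hd (by
          apply mul_le_mul_of_nonneg_right hCle (norm_nonneg _))
      have htri : ‖v (2 ^ n * r)‖ - ‖v (2 * (2 ^ n * r))‖ ≤
          ‖v (2 ^ n * r) - v (2 * (2 ^ n * r))‖ := by
        have := norm_sub_norm_le (v (2 ^ n * r)) (v (2 * (2 ^ n * r)))
        linarith
      have hlower : 3 / 4 * ‖v (2 ^ n * r)‖ ≤ ‖v (2 * (2 ^ n * r))‖ := by linarith
      have heq : (2 : ℝ) ^ (n + 1) * r = 2 * (2 ^ n * r) := by ring
      rw [heq]
      calc (3 / 4 : ℝ) ^ (n + 1) * ‖v r‖ = 3 / 4 * ((3 / 4 : ℝ) ^ n * ‖v r‖) := by ring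
        _ ≤ 3 / 4 * ‖v (2 ^ n * r)‖ := by linarith
        _ ≤ ‖v (2 * (2 ^ n * r))‖ := hlower
  have main : ∀ n : ℕ, (3 : ℝ) ^ n * ‖v r‖ ≤ D / r ^ 2 := by
    intro n
    have h2n : (1 : ℝ) ≤ 2 ^ n := one_le_pow₀ (by norm_num)
    have hsr : r ≤ 2 ^ n * r := le_mul_of_one_le_left hrpos.le h2n
    have hsR : R₂ ≤ 2 ^ n * r := le_trans hr hsr
    have h1 := key n
    have h2 := hdecay (2 ^ n * r) hsR
    have h4 : (0 : ℝ) < 4 ^ n := by positivity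
    calc (3 : ℝ) ^ n * ‖v r‖ = 4 ^ n * ((3 / 4 : ℝ) ^ n * ‖v r‖) := by
          rw [← mul_assoc, ← mul_pow]; norm_num
      _ ≤ 4 ^ n * (D / (2 ^ n * r) ^ 2) := by
          exact mul_le_mul_of_nonneg_left (le_trans h1 h2) h4.le
      _ = D / r ^ 2 := by
          have h2pow : ((2 : ℝ) ^ n) ^ 2 = 4 ^ n := by
            rw [← pow_mul, mul_comm, pow_mul]; norm_num
          rw [mul_pow, h2pow]
          field_simp
  obtain ⟨n, hn⟩ := pow_unbounded_of_one_lt (D / r ^ 2 / ‖v r‖) (by norm_num : (1 : ℝ) < 3)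
  have := main n
  rw [div_lt_iff₀ hnorm] at hn
  linarith
end
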